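/- Let i be a new node of R_q(G) with neighbors s and t, and let j be an old node. Then the hitting time on R_q(G) satisfies T̃_{ij} = 1 + ((2q+1)/(q+2))·(T_{sj} + T_{tj}), where T denotes hitting times of the simple random walk on G. -/

import Mathlib

open scoped Classical

/-- The `q`-triangulation graph `R_q(G)`: for each edge `e` of `G` we add `q` new
nodes (indexed by `G.edgeSet × Fin q`), each adjacent exactly to the two endpoints of `e`. -/
noncomputable def qTriangulation {V : Type} (G : SimpleGraph V) (q : ℕ) :
    SimpleGraph (V ⊕ (G.edgeSet × Fin q)) where
  Adj x y :=
    match x, y with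
    | Sum.inl a, Sum.inl b => G.Adj a b
    | Sum.inl a, Sum.inr p => a ∈ (p.1 : Sym2 V)
    | Sum.inr p, Sum.inl b => b ∈ (p.1 : Sym2 V)
    | Sum.inr _, Sum.inr _ => False
  symm := by
    refine ⟨?_⟩
    rintro (a | p) (b | p') h
    · exact h.symm
    · exact h
    · exact h
    · exact h.elim
  loopless := by
    refine ⟨?_⟩
    rintro (a | p) h
    · exact G.loopless.irrefl a h
    · exact h

/-- `T` is the table of hitting times of the simple random walk on `H`:
`T j j = 0` and, for `i ≠ j`, `T i j = 1 + (∑_{k ~ i} T k j)/deg(i)`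
(first-step analysis; for a connected graph this system has a unique solution,
namely the expected first-passage times). -/
def IsHittingTime {W : Type} [Fintype W] (H : SimpleGraph W) (T : W → W → ℝ) : Prop :=
  (∀ j, T j j = 0) ∧
    ∀ i j, i ≠ j → T i j = 1 + (∑ k ∈ H.neighborFinset i, T k j) / (H.degree i : ℝ)

variable {V : Type} [Fintype V] {G : SimpleGraph V} {q : ℕ}

lemma qT_adj_inr_inl (p : G.edgeSet × Fin q) (b : V) :
    (qTriangulation G q).Adj (Sum.inr p) (Sum.inl b) ↔ b ∈ (p.1 : Sym2 V) := Iff.rfl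

lemma qT_adj_inl_inl (a b : V) :
    (qTriangulation G q).Adj (Sum.inl a) (Sum.inl b) ↔ G.Adj a b := Iff.rfl

lemma qT_adj_inl_inr (a : V) (p : G.edgeSet × Fin q) :
    (qTriangulation G q).Adj (Sum.inl a) (Sum.inr p) ↔ a ∈ (p.1 : Sym2 V) := Iff.rfl

lemma qT_adj_inr_inr (p p' : G.edgeSet × Fin q) :
    ¬ (qTriangulation G q).Adj (Sum.inr p) (Sum.inr p') := fun h => h

lemma qT_nbr_inr (e : G.edgeSet) (k : Fin q) (s t : V) (he : (e:Sym2 V) = s(s,t)) :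
    (qTriangulation G q).neighborFinset (Sum.inr (e,k)) = {Sum.inl s, Sum.inl t} := by
  ext x
  cases x with
  | inl b =>
      simp [SimpleGraph.mem_neighborFinset, qT_adj_inr_inl, he, Sym2.mem_iff]
  | inr p =>
      simp [SimpleGraph.mem_neighborFinset, qT_adj_inr_inr]

lemma sum_edge [DecidableEq V] (a : V) {M : Type} [AddCommMonoid M] (g : Sym2 V → M) :
    ∑ e' : G.edgeSet, (if a ∈ (e' : Sym2 V) then g e' else 0)
      = ∑ b ∈ G.neighborFinset a, g s(a,b) := by
  rw [← Finset.sum_filter]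
  refine Finset.sum_bij' (fun e' he' => Sym2.Mem.other' (by simpa using he' : a ∈ (e':Sym2 V)))
    (fun b hb => (⟨s(a,b), G.mem_edgeSet.mpr ((SimpleGraph.mem_neighborFinset ..).mp hb)⟩ : G.edgeSet))
    ?_ ?_ ?_ ?_ ?_
  · intro e' he'
    have ha : a ∈ (e':Sym2 V) := by simpa using he'
    rw [SimpleGraph.mem_neighborFinset, ← SimpleGraph.mem_edgeSet, Sym2.other_spec' ha]
    exact e'.2
  · intro b hb; simp
  · intro e' he'
    have ha : a ∈ (e':Sym2 V) := by simpa using he'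
    ext1; exact Sym2.other_spec' ha
  · intro b hb
    have ha : a ∈ s(a,b) := by simp
    show Sym2.Mem.other' ha = b
    have hsp := Sym2.other_spec' ha
    rw [Sym2.eq_iff] at hsp
    rcases hsp with ⟨-, h2⟩ | ⟨h1, h2⟩
    · exact h2
    · rw [h2, h1]
  · intro e' he'
    have ha : a ∈ (e':Sym2 V) := by simpa using he'
    rw [Sym2.other_spec' ha]

noncomputable def edgeLift (G : SimpleGraph V) (q : ℕ) {M : Type} [AddCommMonoid M]
    (f : V ⊕ (G.edgeSet × Fin q) → M) : Sym2 V → M :=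
  fun e => if h : e ∈ G.edgeSet then ∑ k : Fin q, f (Sum.inr (⟨e, h⟩, k)) else 0

lemma sum_nbr_inl [DecidableEq V] (a : V) {M : Type} [AddCommMonoid M]
    (f : V ⊕ (G.edgeSet × Fin q) → M) :
    ∑ x ∈ (qTriangulation G q).neighborFinset (Sum.inl a), f x
      = ∑ b ∈ G.neighborFinset a, f (Sum.inl b)
        + ∑ b ∈ G.neighborFinset a, edgeLift G q f s(a,b) := by
  classical
  rw [SimpleGraph.neighborFinset_eq_filter, Finset.sum_filter, Fintype.sum_sum_type]
  congr 1
  · rw [← Finset.sum_filter, SimpleGraph.neighborFinset_eq_filter]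
    rfl
  · rw [Fintype.sum_prod_type, ← sum_edge a (edgeLift G q f)]
    refine Finset.sum_congr rfl (fun e' _ => ?_)
    by_cases h : a ∈ (e' : Sym2 V)
    · simp only [h, if_true, edgeLift, dif_pos e'.2]
      refine Finset.sum_congr rfl (fun k _ => ?_)
      · rw [if_pos]; exact h
    · rw [if_neg h]
      exact Finset.sum_eq_zero (fun k _ => if_neg (fun hk => h hk))

lemma deg_inl [DecidableEq V] (a : V) :
    ((qTriangulation G q).degree (Sum.inl a) : ℝ) = ((q : ℝ) + 1) * G.degree a := by
  classical
  have h0 : (qTriangulation G q).degree (Sum.inl a)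
      = ∑ x ∈ (qTriangulation G q).neighborFinset (Sum.inl a), 1 :=
    Finset.card_eq_sum_ones _
  rw [h0, sum_nbr_inl a (fun _ => (1:ℕ))]
  have h1 : ∑ b ∈ G.neighborFinset a, (1:ℕ) = G.degree a := (Finset.card_eq_sum_ones _).symm
  have h2 : ∀ b ∈ G.neighborFinset a, edgeLift G q (fun _ => (1:ℕ)) s(a,b) = q := by
    intro b hb
    have h3 : s(a,b) ∈ G.edgeSet := G.mem_edgeSet.mpr ((SimpleGraph.mem_neighborFinset ..).mp hb)
    simp [edgeLift, h3]
  rw [Finset.sum_congr rfl h2, h1, Finset.sum_const, smul_eq_mul]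
  have hc : (G.neighborFinset a).card = G.degree a := rfl
  rw [hc]
  push_cast
  ring


lemma new_node_formula (T' : (V ⊕ (G.edgeSet × Fin q)) → (V ⊕ (G.edgeSet × Fin q)) → ℝ)
    (hT' : IsHittingTime (qTriangulation G q) T')
    (e : G.edgeSet) (k : Fin q) (s t : V) (he : (e : Sym2 V) = s(s,t)) (j : V) :
    T' (Sum.inr (e,k)) (Sum.inl j)
      = 1 + (T' (Sum.inl s) (Sum.inl j) + T' (Sum.inl t) (Sum.inl j)) / 2 := by
  have hst : s ≠ t := by
    have h2 := e.2
    rw [he, G.mem_edgeSet] at h2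
    exact h2.ne
  have hdeg : ((qTriangulation G q).degree (Sum.inr (e,k)) : ℝ) = 2 := by
    have : (qTriangulation G q).degree (Sum.inr (e,k)) = 2 := by
      show ((qTriangulation G q).neighborFinset (Sum.inr (e,k))).card = 2
      rw [qT_nbr_inr e k s t he]
      exact Finset.card_pair (by simpa using hst)
    rw [this]; norm_num
  rw [hT'.2 _ _ (by simp), qT_nbr_inr e k s t he,
    Finset.sum_pair (by simpa using hst : (Sum.inl s : V ⊕ (G.edgeSet × Fin q)) ≠ Sum.inl t), hdeg]

lemma exists_adj_of_ne (hG : G.Connected) {a j : V} (h : a ≠ j) : ∃ b, G.Adj a b := by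
  obtain ⟨w⟩ := hG.preconnected a j
  cases w with
  | nil => exact absurd rfl h
  | cons h' _ => exact ⟨_, h'⟩

lemma old_node_formula [DecidableEq V] (hG : G.Connected)
    (T' : (V ⊕ (G.edgeSet × Fin q)) → (V ⊕ (G.edgeSet × Fin q)) → ℝ)
    (hT' : IsHittingTime (qTriangulation G q) T') (a j : V) (haj : a ≠ j) :
    T' (Sum.inl a) (Sum.inl j)
      = (4*(q:ℝ)+2)/((q:ℝ)+2)
        + (∑ b ∈ G.neighborFinset a, T' (Sum.inl b) (Sum.inl j)) / (G.degree a : ℝ) := by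
  classical
  set x := T' (Sum.inl a) (Sum.inl j) with hx
  set S := ∑ b ∈ G.neighborFinset a, T' (Sum.inl b) (Sum.inl j) with hS
  have hd : (0:ℝ) < (G.degree a : ℝ) := by
    obtain ⟨b, hb⟩ := exists_adj_of_ne hG haj
    exact_mod_cast (G.degree_pos_iff_exists_adj a).mpr ⟨b, hb⟩
  set d := (G.degree a : ℝ) with hdd
  -- edgeLift value for each neighbor
  have hEL : ∀ b ∈ G.neighborFinset a,
      edgeLift G q (fun z => T' z (Sum.inl j)) s(a,b)
        = (q:ℝ) * (1 + (x + T' (Sum.inl b) (Sum.inl j))/2) := by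
    intro b hb
    have hab : G.Adj a b := (SimpleGraph.mem_neighborFinset ..).mp hb
    have hmem : s(a,b) ∈ G.edgeSet := G.mem_edgeSet.mpr hab
    have hval : ∀ k : Fin q,
        T' (Sum.inr ((⟨s(a,b), hmem⟩ : G.edgeSet), k)) (Sum.inl j)
          = 1 + (x + T' (Sum.inl b) (Sum.inl j))/2 := by
      intro k
      exact new_node_formula T' hT' ⟨s(a,b), hmem⟩ k a b rfl j
    simp only [edgeLift, dif_pos hmem]
    rw [Finset.sum_congr rfl (fun k _ => hval k), Finset.sum_const, Finset.card_univ,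
      Fintype.card_fin, nsmul_eq_mul]
  have hmain := hT'.2 (Sum.inl a) (Sum.inl j) (by simpa using haj)
  rw [sum_nbr_inl a (fun z => T' z (Sum.inl j)), deg_inl a,
    Finset.sum_congr rfl hEL] at hmain
  have hsum : ∑ b ∈ G.neighborFinset a, (q:ℝ) * (1 + (x + T' (Sum.inl b) (Sum.inl j))/2)
      = (q:ℝ) * d + (q:ℝ)/2 * d * x + (q:ℝ)/2 * S := by
    rw [Finset.sum_congr rfl (fun b _ => by ring_nf :
      ∀ b ∈ G.neighborFinset a, (q:ℝ) * (1 + (x + T' (Sum.inl b) (Sum.inl j))/2)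
        = ((q:ℝ) + (q:ℝ)/2 * x) + (q:ℝ)/2 * T' (Sum.inl b) (Sum.inl j))]
    rw [Finset.sum_add_distrib, Finset.sum_const, ← Finset.mul_sum, nsmul_eq_mul]
    have : ((G.neighborFinset a).card : ℝ) = d := rfl
    rw [this]
    ring
  rw [hsum] at hmain
  rw [← hx, ← hS, ← hdd] at hmain
  have hq2 : ((q:ℝ)+2) ≠ 0 := by positivity
  have hq1d : ((q:ℝ)+1) * d ≠ 0 := by positivity
  field_simp at hmain ⊢
  nlinarith [hmain, hd]

lemma walk_max {D : V → ℝ} {M : ℝ} (hmle : ∀ v, D v ≤ M) :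
    ∀ {v j : V}, G.Walk v j →
      (∀ u, u ≠ j → D u = (∑ k ∈ G.neighborFinset u, D k) / (G.degree u : ℝ)) →
      D v = M → D j = M := by
  intro v j w
  induction w with
  | nil => exact fun _ h => h
  | @cons u v' j h' w' ih =>
      intro harm hu
      by_cases huj : u = j
      · rwa [huj] at hu
      have hdeg : 0 < G.degree u := (G.degree_pos_iff_exists_adj u).mpr ⟨v', h'⟩
      have hdR : (0:ℝ) < (G.degree u : ℝ) := by exact_mod_cast hdeg
      have hv' : D v' = M := by
        by_contra hne
        have hlt : D v' < M := lt_of_le_of_ne (hmle v') hne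
        have hsum : ∑ k ∈ G.neighborFinset u, D k < ∑ k ∈ G.neighborFinset u, M := by
          refine Finset.sum_lt_sum (fun k _ => hmle k) ⟨v', ?_, hlt⟩
          exact (SimpleGraph.mem_neighborFinset ..).mpr h'
        rw [Finset.sum_const, nsmul_eq_mul] at hsum
        have hcard : ((G.neighborFinset u).card : ℝ) = (G.degree u : ℝ) := rfl
        rw [hcard] at hsum
        have hlt2 : D u < M := by
          rw [harm u huj, div_lt_iff₀ hdR]
          linarith [hsum]
        rw [hu] at hlt2
        exact absurd hlt2 (lt_irrefl M)
      exact ih harm hv'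

lemma hitting_le (hG : G.Connected) {T U : V → V → ℝ}
    (hT : IsHittingTime G T) (hU : IsHittingTime G U) (i j : V) : T i j ≤ U i j := by
  classical
  obtain ⟨m, -, hm⟩ := Finset.exists_max_image Finset.univ (fun v => T v j - U v j)
    ⟨i, Finset.mem_univ i⟩
  set D : V → ℝ := fun v => T v j - U v j with hD
  set M := D m with hM
  have hmle : ∀ v, D v ≤ M := fun v => hm v (Finset.mem_univ v)
  have harm : ∀ u, u ≠ j → D u = (∑ k ∈ G.neighborFinset u, D k) / (G.degree u : ℝ) := by
    intro u hu
    have h1 := hT.2 u j hu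
    have h2 := hU.2 u j hu
    simp only [hD]
    rw [h1, h2, Finset.sum_sub_distrib]
    ring
  obtain ⟨w⟩ := hG.preconnected m j
  have hjM : D j = M := walk_max hmle w harm rfl
  have hj0 : D j = 0 := by simp [hD, hT.1 j, hU.1 j]
  have hM0 : M = 0 := by rw [← hjM, hj0]
  have h := hmle i
  rw [hM0] at h
  simpa [hD] using h

lemma hitting_eq (hG : G.Connected) {T U : V → V → ℝ}
    (hT : IsHittingTime G T) (hU : IsHittingTime G U) : T = U := by
  funext i j
  exact le_antisymm (hitting_le hG hT hU i j) (hitting_le hG hU hT i j)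

/-- For a new node of `R_q(G)` attached to the edge `st` of `G` and an old
node `j`: `T̃_{ij} = 1 + ((2q+1)/(q+2))·(T_{sj} + T_{tj})`. -/
theorem hittingTime_qTriangulation_new_old {V : Type} [Fintype V]
    (G : SimpleGraph V) (hG : G.Connected) (q : ℕ) (hq : 0 < q)
    (T : V → V → ℝ) (hT : IsHittingTime G T)
    (T' : (V ⊕ (G.edgeSet × Fin q)) → (V ⊕ (G.edgeSet × Fin q)) → ℝ)
    (hT' : IsHittingTime (qTriangulation G q) T')
    (e : G.edgeSet) (k : Fin q) (s t : V) (he : (e : Sym2 V) = s(s, t)) (j : V) :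
    T' (Sum.inr (e, k)) (Sum.inl j)
      = 1 + (2 * (q : ℝ) + 1) / ((q : ℝ) + 2) * (T s j + T t j) := by
  classical
  have hst : G.Adj s t := by
    have h2 := e.2
    rwa [he, G.mem_edgeSet] at h2
  set U : V → V → ℝ := fun a b => (((q:ℝ)+2)/(4*(q:ℝ)+2)) * T' (Sum.inl a) (Sum.inl b) with hU
  have hc : (4*(q:ℝ)+2) ≠ 0 := by positivity
  have hc2 : ((q:ℝ)+2) ≠ 0 := by positivity
  have hUhit : IsHittingTime G U := by
    constructor
    · intro j2; simp [hU, hT'.1]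
    · intro a j2 haj
      have hof := old_node_formula hG T' hT' a j2 haj
      have hd : (0:ℝ) < (G.degree a : ℝ) := by
        obtain ⟨b, hb⟩ := exists_adj_of_ne hG haj
        exact_mod_cast (G.degree_pos_iff_exists_adj a).mpr ⟨b, hb⟩
      simp only [hU]
      rw [hof, ← Finset.mul_sum]
      field_simp
  have hTU : T = U := hitting_eq hG hT hUhit
  have h1 := new_node_formula T' hT' e k s t he j
  have hs : T' (Sum.inl s) (Sum.inl j) = (4*(q:ℝ)+2)/((q:ℝ)+2) * T s j := by
    have h2 := congrFun (congrFun hTU s) j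
    simp only [hU] at h2
    field_simp at h2 ⊢
    linarith [h2]
  have ht2 : T' (Sum.inl t) (Sum.inl j) = (4*(q:ℝ)+2)/((q:ℝ)+2) * T t j := by
    have h2 := congrFun (congrFun hTU t) j
    simp only [hU] at h2
    field_simp at h2 ⊢
    linarith [h2]
  rw [h1, hs, ht2]
  field_simp
  ring
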